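/- Suppose V is not constant. Define j_lower := inf { j > 0 : α⁺(j) > 1 } and j_upper := inf { j > 0 : α⁻(j) > 1 }. Then 0 ≤ j_lower < j_upper < ∞. -/

import Mathlib

/-!
Put `s = j^{2/3}`, so that `j² = s³` and the profile `m ↦ s³/(2m²) + m` is strictly decreasing
on `(0, s]` and strictly increasing on `[s, ∞)`. On the lower branch `m⁻_j ≤ s`, so `α⁻(j) > 1`
forces `j > 1` and `j_upper ≥ 1`. On the upper branch `s³/(2m²) ≤ s/2`, so
`m⁺_j ≥ s + (max V - V)` and `α⁺(j) ≥ j^{2/3} + ∫ (max V - V)`; the last integral is positive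
because `V` is continuous, periodic and not constant, so some `j < 1` already has `α⁺(j) > 1`.
For large `j` the lower branch stays above `s/2` on `[0, 1]`, so `α⁻(j) > 1` does occur.
Measurability of the branches comes from their monotone dependence on `V x`.
-/

open MeasureTheory Set

theorem measurable_of_le_imp_le {α : Type*} [MeasurableSpace α] {V f : α → ℝ}
    (hV : Measurable V) (h : ∀ x y, V x ≤ V y → f x ≤ f y) : Measurable f := by
  refine measurable_of_Iic fun t => ?_
  have hset : f ⁻¹' Iic t = V ⁻¹' lowerClosure (V '' (f ⁻¹' Iic t)) := by
    ext y
    simp only [mem_preimage, mem_Iic, SetLike.mem_coe, mem_lowerClosure, mem_image]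
    constructor
    · exact fun hy => ⟨V y, ⟨y, hy, rfl⟩, le_rfl⟩
    · rintro ⟨_, ⟨x, hx, rfl⟩, hyx⟩
      exact (h y x hyx).trans hx
  rw [hset]
  exact hV (lowerClosure _).lower.ordConnected.measurableSet

section Profile

variable {s : ℝ}

theorem cube_div_sq_add_sub_cube_div_sq_add {a b : ℝ} (ha : a ≠ 0) (hb : b ≠ 0) :
    s ^ 3 / (2 * b ^ 2) + b - (s ^ 3 / (2 * a ^ 2) + a)
      = (b - a) * (2 * a ^ 2 * b ^ 2 - s ^ 3 * (a + b)) / (2 * a ^ 2 * b ^ 2) := by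
  field_simp
  ring

theorem strictMonoOn_cube_div_sq_add (hs : 0 < s) :
    StrictMonoOn (fun m => s ^ 3 / (2 * m ^ 2) + m) (Ici s) := by
  intro a (ha : s ≤ a) b (hb : s ≤ b) hab
  have ha0 : 0 < a := hs.trans_le ha
  have hb0 : 0 < b := ha0.trans hab
  have hs3 : s ^ 3 ≤ a ^ 3 := pow_le_pow_left₀ hs.le ha 3
  have key := cube_div_sq_add_sub_cube_div_sq_add (s := s) ha0.ne' hb0.ne'
  have : s ^ 3 * (a + b) < 2 * a ^ 2 * b ^ 2 := by
    nlinarith [mul_pos ha0 hb0, mul_pos (mul_pos ha0 ha0) (mul_pos ha0 (sub_pos.2 hab))]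
  have : 0 < (b - a) * (2 * a ^ 2 * b ^ 2 - s ^ 3 * (a + b)) / (2 * a ^ 2 * b ^ 2) := by
    apply div_pos (mul_pos (by linarith) (by linarith)) (by positivity)
  simp only
  linarith

theorem strictAntiOn_cube_div_sq_add :
    StrictAntiOn (fun m => s ^ 3 / (2 * m ^ 2) + m) (Ioc 0 s) := by
  intro a ⟨ha0, _⟩ b ⟨hb0, hb⟩ hab
  have hs3 : b ^ 3 ≤ s ^ 3 := pow_le_pow_left₀ hb0.le hb 3
  have key := cube_div_sq_add_sub_cube_div_sq_add (s := s) ha0.ne' hb0.ne'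
  have : 2 * a ^ 2 * b ^ 2 < s ^ 3 * (a + b) := by
    nlinarith [mul_pos ha0 hb0, mul_pos (mul_pos hb0 hb0) (mul_pos hb0 (sub_pos.2 hab))]
  have : (b - a) * (2 * a ^ 2 * b ^ 2 - s ^ 3 * (a + b)) / (2 * a ^ 2 * b ^ 2) < 0 := by
    apply div_neg_of_neg_of_pos (mul_neg_of_pos_of_neg (by linarith) (by linarith)) (by positivity)
  simp only
  linarith

end Profile

theorem rpow_two_thirds_pow_three {j : ℝ} (hj : 0 ≤ j) : (j ^ ((2:ℝ)/3)) ^ 3 = j ^ 2 := by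
  rw [← Real.rpow_natCast, ← Real.rpow_mul hj]
  norm_num

section Branches

/-- The paper's `m⁻_j` (and below `m⁺_j`), with `M = max V`. -/
def IsLowerBranch (V : ℝ → ℝ) (M j : ℝ) (m : ℝ → ℝ) : Prop :=
  ∀ x, 0 < m x ∧ m x ≤ j ^ ((2:ℝ)/3) ∧
    j ^ 2 / (2 * (m x) ^ 2) + m x = (M + 3 / 2 * j ^ ((2:ℝ)/3)) - V x

def IsUpperBranch (V : ℝ → ℝ) (M j : ℝ) (m : ℝ → ℝ) : Prop :=
  ∀ x, j ^ ((2:ℝ)/3) ≤ m x ∧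
    j ^ 2 / (2 * (m x) ^ 2) + m x = (M + 3 / 2 * j ^ ((2:ℝ)/3)) - V x

variable {V : ℝ → ℝ} {M j : ℝ} {m : ℝ → ℝ}

namespace IsLowerBranch

theorem profile_eq (hj : 0 ≤ j) (h : IsLowerBranch V M j m) (x : ℝ) :
    (j ^ ((2:ℝ)/3)) ^ 3 / (2 * (m x) ^ 2) + m x = M + 3 / 2 * j ^ ((2:ℝ)/3) - V x := by
  rw [rpow_two_thirds_pow_three hj]
  exact (h x).2.2

theorem le_of_le (hj : 0 < j) (h : IsLowerBranch V M j m) {x y : ℝ} (hxy : V x ≤ V y) :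
    m x ≤ m y := by
  have hs : 0 < j ^ ((2:ℝ)/3) := Real.rpow_pos_of_pos hj _
  rw [← strictAntiOn_cube_div_sq_add.le_iff_ge ⟨(h y).1, (h y).2.1⟩ ⟨(h x).1, (h x).2.1⟩]
  simp only [h.profile_eq hj.le]
  linarith

theorem measurable (hV : Measurable V) (hj : 0 < j) (h : IsLowerBranch V M j m) :
    Measurable m :=
  measurable_of_le_imp_le hV fun _ _ => h.le_of_le hj

theorem intervalIntegrable (hV : Measurable V) (hj : 0 < j) (h : IsLowerBranch V M j m)
    (a b : ℝ) : IntervalIntegrable m volume a b := by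
  refine (intervalIntegrable_const (c := j ^ ((2:ℝ)/3))).mono_fun'
    (h.measurable hV hj).aestronglyMeasurable (ae_of_all _ fun x => ?_)
  exact (Real.norm_of_nonneg (h x).1.le).trans_le (h x).2.1

theorem integral_le (hV : Measurable V) (hj : 0 < j) (h : IsLowerBranch V M j m) :
    ∫ x in (0:ℝ)..1, m x ≤ j ^ ((2:ℝ)/3) := by
  simpa using intervalIntegral.integral_mono_on zero_le_one (h.intervalIntegrable hV hj 0 1)
    intervalIntegrable_const fun x _ => (h x).2.1

theorem half_le (hj : 0 < j) (h : IsLowerBranch V M j m) {x : ℝ}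
    (hx : M - V x ≤ j ^ ((2:ℝ)/3)) : j ^ ((2:ℝ)/3) / 2 ≤ m x := by
  have hs : 0 < j ^ ((2:ℝ)/3) := Real.rpow_pos_of_pos hj _
  rw [← strictAntiOn_cube_div_sq_add.le_iff_ge ⟨(h x).1, (h x).2.1⟩ ⟨by positivity, by linarith⟩]
  simp only [h.profile_eq hj.le]
  field_simp
  nlinarith

end IsLowerBranch

namespace IsUpperBranch

theorem profile_eq (hj : 0 ≤ j) (h : IsUpperBranch V M j m) (x : ℝ) :
    (j ^ ((2:ℝ)/3)) ^ 3 / (2 * (m x) ^ 2) + m x = M + 3 / 2 * j ^ ((2:ℝ)/3) - V x := by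
  rw [rpow_two_thirds_pow_three hj]
  exact (h x).2

theorem le_of_le (hj : 0 < j) (h : IsUpperBranch V M j m) {x y : ℝ} (hxy : V x ≤ V y) :
    m y ≤ m x := by
  have hs : 0 < j ^ ((2:ℝ)/3) := Real.rpow_pos_of_pos hj _
  rw [← (strictMonoOn_cube_div_sq_add hs).le_iff_le (h y).1 (h x).1]
  simp only [h.profile_eq hj.le]
  linarith

theorem measurable (hV : Measurable V) (hj : 0 < j) (h : IsUpperBranch V M j m) :
    Measurable m :=
  measurable_of_le_imp_le hV.neg fun _ _ hxy => h.le_of_le hj (neg_le_neg_iff.1 hxy)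

theorem le_sub (h : IsUpperBranch V M j m) (x : ℝ) :
    m x ≤ M + 3 / 2 * j ^ ((2:ℝ)/3) - V x := by
  have : 0 ≤ j ^ 2 / (2 * (m x) ^ 2) := by positivity
  linarith [(h x).2]

theorem add_sub_le (hj : 0 < j) (h : IsUpperBranch V M j m) (x : ℝ) :
    j ^ ((2:ℝ)/3) + (M - V x) ≤ m x := by
  have hs : 0 < j ^ ((2:ℝ)/3) := Real.rpow_pos_of_pos hj _
  have hm : 0 < m x := hs.trans_le (h x).1
  have : (j ^ ((2:ℝ)/3)) ^ 3 / (2 * (m x) ^ 2) ≤ j ^ ((2:ℝ)/3) / 2 := by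
    rw [div_le_div_iff₀ (by positivity) two_pos]
    nlinarith [pow_le_pow_left₀ hs.le (h x).1 2]
  linarith [h.profile_eq hj.le x]

theorem intervalIntegrable (hV : Continuous V) (hj : 0 < j) (h : IsUpperBranch V M j m)
    (a b : ℝ) : IntervalIntegrable m volume a b := by
  have hbound : Continuous fun x => M + 3 / 2 * j ^ ((2:ℝ)/3) - V x := by fun_prop
  refine (hbound.intervalIntegrable a b).mono_fun'
    (h.measurable hV.measurable hj).aestronglyMeasurable (ae_of_all _ fun x => ?_)
  have hm : 0 ≤ m x := (Real.rpow_pos_of_pos hj _).le.trans (h x).1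
  exact (Real.norm_of_nonneg hm).trans_le (h.le_sub x)

theorem add_integral_le (hV : Continuous V) (hj : 0 < j) (h : IsUpperBranch V M j m) :
    j ^ ((2:ℝ)/3) + ∫ x in (0:ℝ)..1, (M - V x) ≤ ∫ x in (0:ℝ)..1, m x := by
  have hVi : IntervalIntegrable (fun x => M - V x) volume 0 1 :=
    Continuous.intervalIntegrable (by fun_prop) 0 1
  have := intervalIntegral.integral_mono_on zero_le_one (intervalIntegrable_const.add hVi)
    (h.intervalIntegrable hV hj 0 1) fun x _ => h.add_sub_le hj x
  rwa [intervalIntegral.integral_add intervalIntegrable_const hVi,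
    intervalIntegral.integral_const, sub_zero, one_smul] at this

end IsUpperBranch

theorem integral_sub_pos_of_isGreatest (hVc : Continuous V)
    (hVp : Function.Periodic V 1) (hVnc : ∃ x y, V x ≠ V y) (hM : IsGreatest (Set.range V) M) :
    0 < ∫ x in (0:ℝ)..1, (M - V x) := by
  have hle : ∀ x, V x ≤ M := fun x => hM.2 ⟨x, rfl⟩
  obtain ⟨z, hz⟩ : ∃ z, V z < M := by
    obtain ⟨x, y, hxy⟩ := hVnc
    by_contra! h
    exact hxy ((le_antisymm (hle x) (h x)).trans (le_antisymm (hle y) (h y)).symm)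
  have hfract : V (Int.fract z) = V z := by
    rw [← Int.self_sub_floor, ← mul_one (⌊z⌋ : ℝ)]
    exact hVp.sub_int_mul_eq ⌊z⌋
  refine intervalIntegral.integral_pos zero_lt_one (by fun_prop)
    (fun x _ => sub_nonneg.2 (hle x)) ⟨Int.fract z, ?_, ?_⟩
  · exact ⟨Int.fract_nonneg z, (Int.fract_lt_one z).le⟩
  · rw [hfract]
    exact sub_pos.2 hz

theorem IsLowerBranch.one_lt (hV : Measurable V) (hj : 0 < j) (h : IsLowerBranch V M j m)
    (h1 : 1 < ∫ x in (0:ℝ)..1, m x) : 1 < j := by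
  by_contra! hj1
  have := h.integral_le hV hj
  linarith [Real.rpow_le_one hj.le hj1 (by norm_num : (0:ℝ) ≤ 2/3)]

theorem exists_one_lt_integral_of_isLowerBranch (hVc : Continuous V) {mm : ℝ → ℝ → ℝ}
    (hmm : ∀ j, 0 < j → IsLowerBranch V M j (mm j)) :
    ∃ j, 0 < j ∧ 1 < ∫ x in (0:ℝ)..1, mm j x := by
  obtain ⟨x₀, -, hx₀⟩ :=
    isCompact_Icc.exists_isMinOn (nonempty_Icc.2 zero_le_one) hVc.continuousOn
  obtain ⟨s, h3s, hsV⟩ : ∃ s : ℝ, 3 ≤ s ∧ M - V x₀ ≤ s := ⟨_, le_max_left _ _, le_max_right _ _⟩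
  have hs : 0 < s := by linarith
  have hJ : 0 < s ^ ((3:ℝ)/2) := Real.rpow_pos_of_pos hs _
  have hJs : (s ^ ((3:ℝ)/2)) ^ ((2:ℝ)/3) = s := by
    rw [← Real.rpow_mul hs.le]
    norm_num
  have hhalf : ∀ x ∈ Icc (0:ℝ) 1, 3 / 2 ≤ mm (s ^ ((3:ℝ)/2)) x := by
    intro x hx
    have hVx : M - V x ≤ s := (sub_le_sub_left (hx₀ hx) M).trans hsV
    have := (hmm _ hJ).half_le hJ (by rwa [hJs])
    rw [hJs] at this
    linarith
  refine ⟨_, hJ, ?_⟩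
  calc (1:ℝ) < ∫ _ in (0:ℝ)..1, (3 / 2 : ℝ) := by rw [intervalIntegral.integral_const]; norm_num
    _ ≤ ∫ x in (0:ℝ)..1, mm (s ^ ((3:ℝ)/2)) x :=
      intervalIntegral.integral_mono_on zero_le_one intervalIntegrable_const
        ((hmm _ hJ).intervalIntegrable hVc.measurable hJ 0 1) hhalf

theorem exists_lt_one_lt_integral_of_isUpperBranch (hVc : Continuous V)
    (hVp : Function.Periodic V 1) (hVnc : ∃ x y, V x ≠ V y) (hM : IsGreatest (Set.range V) M)
    {mp : ℝ → ℝ → ℝ} (hmp : ∀ j, 0 < j → IsUpperBranch V M j (mp j)) :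
    ∃ j, 0 < j ∧ j < 1 ∧ 1 < ∫ x in (0:ℝ)..1, mp j x := by
  have hκ := integral_sub_pos_of_isGreatest hVc hVp hVnc hM
  set κ := ∫ x in (0:ℝ)..1, (M - V x)
  set j := max (1 / 2) (1 - κ / 2)
  have hj : 0 < j := lt_max_of_lt_left one_half_pos
  have hj1 : j < 1 := max_lt (by norm_num) (by linarith)
  refine ⟨j, hj, hj1, ?_⟩
  have := (hmp j hj).add_integral_le hVc hj
  linarith [Real.self_le_rpow_of_le_one hj.le hj1.le (by norm_num : (2:ℝ)/3 ≤ 1),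
    le_max_right (1 / 2) (1 - κ / 2)]

end Branches

/-- for non-constant `V`, with
`j_lower = inf {j > 0 : α⁺(j) > 1}` and `j_upper = inf {j > 0 : α⁻(j) > 1}`,
one has `0 ≤ j_lower < j_upper < ∞` (finiteness of `j_upper` being expressed by
the nonemptiness of the corresponding sets). -/
theorem stmt_13
    (V : ℝ → ℝ) (hVc : Continuous V) (hVp : Function.Periodic V 1)
    (hVnc : ∃ x y, V x ≠ V y)
    (M : ℝ) (hM : IsGreatest (Set.range V) M)
    (mm mp : ℝ → ℝ → ℝ)
    (hmm : ∀ j x, 0 < j →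
      0 < mm j x ∧ mm j x ≤ j ^ ((2:ℝ)/3) ∧
      j ^ 2 / (2 * (mm j x) ^ 2) + mm j x = (M + 3 / 2 * j ^ ((2:ℝ)/3)) - V x)
    (hmp : ∀ j x, 0 < j →
      j ^ ((2:ℝ)/3) ≤ mp j x ∧
      j ^ 2 / (2 * (mp j x) ^ 2) + mp j x = (M + 3 / 2 * j ^ ((2:ℝ)/3)) - V x) :
    {j : ℝ | 0 < j ∧ 1 < ∫ x in (0:ℝ)..1, mp j x}.Nonempty ∧
    {j : ℝ | 0 < j ∧ 1 < ∫ x in (0:ℝ)..1, mm j x}.Nonempty ∧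
    0 ≤ sInf {j : ℝ | 0 < j ∧ 1 < ∫ x in (0:ℝ)..1, mp j x} ∧
    sInf {j : ℝ | 0 < j ∧ 1 < ∫ x in (0:ℝ)..1, mp j x} <
      sInf {j : ℝ | 0 < j ∧ 1 < ∫ x in (0:ℝ)..1, mm j x} := by
  have hlower : ∀ j, 0 < j → IsLowerBranch V M j (mm j) := fun j hj x => hmm j x hj
  have hupper : ∀ j, 0 < j → IsUpperBranch V M j (mp j) := fun j hj x => hmp j x hj
  obtain ⟨j₀, hj₀, hj₀1, hj₀int⟩ :=
    exists_lt_one_lt_integral_of_isUpperBranch hVc hVp hVnc hM hupper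
  have hne := exists_one_lt_integral_of_isLowerBranch hVc hlower
  refine ⟨⟨j₀, hj₀, hj₀int⟩, hne, Real.sInf_nonneg fun j hj => hj.1.le, ?_⟩
  calc sInf {j : ℝ | 0 < j ∧ 1 < ∫ x in (0:ℝ)..1, mp j x}
      ≤ j₀ := csInf_le ⟨0, fun j hj => hj.1.le⟩ ⟨hj₀, hj₀int⟩
    _ < 1 := hj₀1
    _ ≤ sInf {j : ℝ | 0 < j ∧ 1 < ∫ x in (0:ℝ)..1, mm j x} :=
      le_csInf hne fun j ⟨hj, hint⟩ => ((hlower j hj).one_lt hVc.measurable hj hint).le
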